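/- Let V : Δ(Ω) → ℝ be bounded, continuous and concave and satisfy the dynamic programming equation. Let p ∈ J, let q_I, q_J ∈ Δ(Ω) and a_I, a_J > 0 with a_I + a_J = 1 and p = a_I q_I + a_J q_J, and suppose the two-point measure a_I·δ_{q_I} + a_J·δ_{q_J} ∈ S(p) attains the supremum in the dynamic programming equation at p. Then: (1) V is affine on the segment [q_I, q_J], i.e. V(t·q_I + (1−t)·q_J) = t·V(q_I) + (1−t)·V(q_J) for all t ∈ [0,1]; and (2) for every p′ = a′_I q_I + a′_J q_J with a′_I, a′_J ≥ 0 and a′_I + a′_J = 1, the measure a′_I·δ_{q_I} + a′_J·δ_{q_J} attains the supremum in the dynamic programming equation at p′. -/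

import Mathlib

open MeasureTheory Set

noncomputable section

variable {Ω : Type*}

/-- The investment region `I = {p ∈ Δ(Ω) : ⟨p,r⟩ ≥ 0}`. -/
def invest [Fintype Ω] (r : Ω → ℝ) : Set (Ω → ℝ) :=
  {p | p ∈ stdSimplex ℝ Ω ∧ 0 ≤ ∑ ω, p ω * r ω}

/-- The set `S(p)` of splittings at `p`: Borel probability measures on `ℝ^Ω` carried by the
simplex `Δ(Ω)` with barycenter `p`. -/
def Splittings [Fintype Ω] (p : Ω → ℝ) : Set (Measure (Ω → ℝ)) :=
  {μ | IsProbabilityMeasure μ ∧ μ (stdSimplex ℝ Ω) = 1 ∧ ∫ q, q ∂μ = p}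

/-- The payoff `(1−δ)·μ(I) + δ·∫ V(φ(q)) dμ(q)` appearing in the dynamic programming
equation. -/
def dppPayoff [Fintype Ω] (r : Ω → ℝ) (δ : ℝ) (φ : (Ω → ℝ) → Ω → ℝ)
    (V : (Ω → ℝ) → ℝ) (μ : Measure (Ω → ℝ)) : ℝ :=
  (1 - δ) * (μ (invest r)).toReal + δ * ∫ q in stdSimplex ℝ Ω, V (φ q) ∂μ

/-- `V` satisfies the dynamic programming equation
`V(p) = sup_{μ ∈ S(p)} [(1−δ)·μ(I) + δ·∫ V(φ(q)) dμ(q)]` on the simplex. -/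
def SatisfiesDPP [Fintype Ω] (r : Ω → ℝ) (δ : ℝ) (φ : (Ω → ℝ) → Ω → ℝ)
    (V : (Ω → ℝ) → ℝ) : Prop :=
  ∀ p ∈ stdSimplex ℝ Ω, V p = sSup (dppPayoff r δ φ V '' Splittings p)

/-- The two-point splitting `a·δ_{q₁} + (1−a)·δ_{q₂}`. -/
def twoPoint [Fintype Ω] (a : ℝ) (q₁ q₂ : Ω → ℝ) : Measure (Ω → ℝ) :=
  ENNReal.ofReal a • Measure.dirac q₁ + ENNReal.ofReal (1 - a) • Measure.dirac q₂
/-!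
Each point mass `δ_q` is a splitting of `q`, so the dynamic programming equation gives
`V q ≥ c q`, where `c q` is the payoff of `δ_q`; the payoff of a two-point splitting is the
corresponding convex combination of `c q_I` and `c q_J`. Optimality at `p` thus yields
`V p = a_I c q_I + a_J c q_J ≤ a_I V q_I + a_J V q_J`: the concave function `V` lies on its chord
at an interior point of `[q_I, q_J]`, hence on the whole segment. Equality also forces `V = c` at
`q_I` and `q_J`, so every two-point splitting along the segment attains the value of `V`.
-/

section Chord

variable {E : Type*} [AddCommGroup E] [Module ℝ E] {s : Set E} {f : E → ℝ}

theorem ConcaveOn.le_chord_of_le_chord (hf : ConcaveOn ℝ s f) {x y : E} (hx : x ∈ s)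
    (hy : y ∈ s) {a t : ℝ} (ha : 0 < a) (hat : a ≤ t) (ht : t ≤ 1)
    (hfa : f (a • x + (1 - a) • y) ≤ a * f x + (1 - a) * f y) :
    f (t • x + (1 - t) • y) ≤ t * f x + (1 - t) * f y := by
  have ht₀ : 0 < t := ha.trans_le hat
  set c := a / t
  have hct : c * t = a := div_mul_cancel₀ a ht₀.ne'
  have hc₀ : 0 < c := div_pos ha ht₀
  have hc₁ : c ≤ 1 := (div_le_one ht₀).mpr hat
  have hsplit : c • (t • x + (1 - t) • y) + (1 - c) • y = a • x + (1 - a) • y := by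
    rw [← hct]; module
  have hconc := hf.2 (hf.1 hx hy ht₀.le (sub_nonneg.2 ht) (add_sub_cancel t 1)) hy
    hc₀.le (sub_nonneg.2 hc₁) (add_sub_cancel c 1)
  rw [hsplit, smul_eq_mul, smul_eq_mul] at hconc
  have : c * f (t • x + (1 - t) • y) ≤ c * (t * f x + (1 - t) * f y) := by
    linear_combination hconc + hfa - (f x - f y) * hct
  exact le_of_mul_le_mul_left this hc₀

theorem ConcaveOn.eq_chord_of_le_chord (hf : ConcaveOn ℝ s f) {x y : E} (hx : x ∈ s)
    (hy : y ∈ s) {a : ℝ} (ha₀ : 0 < a) (ha₁ : a < 1)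
    (hfa : f (a • x + (1 - a) • y) ≤ a * f x + (1 - a) * f y) {t : ℝ} (ht : t ∈ Icc 0 1) :
    f (t • x + (1 - t) • y) = t * f x + (1 - t) * f y := by
  refine le_antisymm ?_ (hf.2 hx hy ht.1 (sub_nonneg.2 ht.2) (add_sub_cancel t 1))
  rcases le_total a t with hat | hta
  · exact hf.le_chord_of_le_chord hx hy ha₀ hat ht.2 hfa
  · have hswap : ∀ b : ℝ, b • x + (1 - b) • y = (1 - b) • y + (1 - (1 - b)) • x := fun b => by
      rw [sub_sub_cancel, add_comm]
    have := hf.le_chord_of_le_chord hy hx (a := 1 - a) (t := 1 - t) (by linarith)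
      (by linarith) (by linarith [ht.1]) (by rw [← hswap]; linarith)
    rw [← hswap] at this
    linarith

end Chord

section Splittings

variable [Fintype Ω]

theorem twoPoint_apply_of_mem {a : ℝ} (ha₀ : 0 ≤ a) (ha₁ : a ≤ 1) {q₁ q₂ : Ω → ℝ}
    {s : Set (Ω → ℝ)} (h₁ : q₁ ∈ s) (h₂ : q₂ ∈ s) : twoPoint a q₁ q₂ s = 1 := by
  rw [twoPoint, Measure.add_apply, Measure.smul_apply, Measure.smul_apply,
    Measure.dirac_apply_of_mem h₁, Measure.dirac_apply_of_mem h₂, smul_eq_mul, smul_eq_mul,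
    mul_one, mul_one, ← ENNReal.ofReal_add ha₀ (sub_nonneg.2 ha₁), add_sub_cancel,
    ENNReal.ofReal_one]

theorem dirac_mem_splittings {q : Ω → ℝ} (hq : q ∈ stdSimplex ℝ Ω) :
    Measure.dirac q ∈ Splittings q :=
  ⟨inferInstance, Measure.dirac_apply_of_mem hq, integral_dirac _ q⟩

theorem twoPoint_mem_splittings {a : ℝ} (ha₀ : 0 ≤ a) (ha₁ : a ≤ 1) {q₁ q₂ : Ω → ℝ}
    (h₁ : q₁ ∈ stdSimplex ℝ Ω) (h₂ : q₂ ∈ stdSimplex ℝ Ω) :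
    twoPoint a q₁ q₂ ∈ Splittings (a • q₁ + (1 - a) • q₂) := by
  have hint : ∀ (b : ℝ) (q : Ω → ℝ), Integrable (fun x => x) (ENNReal.ofReal b • Measure.dirac q) :=
    fun b q => (integrable_dirac enorm_lt_top).smul_measure ENNReal.ofReal_ne_top
  refine ⟨⟨twoPoint_apply_of_mem ha₀ ha₁ (mem_univ q₁) (mem_univ q₂)⟩,
    twoPoint_apply_of_mem ha₀ ha₁ h₁ h₂, ?_⟩
  rw [twoPoint, integral_add_measure (hint _ _) (hint _ _), integral_smul_measure,
    integral_smul_measure, integral_dirac, integral_dirac, ENNReal.toReal_ofReal ha₀,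
    ENNReal.toReal_ofReal (sub_nonneg.2 ha₁)]

theorem dppPayoff_twoPoint (r : Ω → ℝ) (δ : ℝ) (φ : (Ω → ℝ) → Ω → ℝ) (V : (Ω → ℝ) → ℝ)
    {a : ℝ} (ha₀ : 0 ≤ a) (ha₁ : a ≤ 1) (q₁ q₂ : Ω → ℝ) :
    dppPayoff r δ φ V (twoPoint a q₁ q₂) =
      a * dppPayoff r δ φ V (Measure.dirac q₁) +
        (1 - a) * dppPayoff r δ φ V (Measure.dirac q₂) := by
  have hint : ∀ (b : ℝ) (q : Ω → ℝ), Integrable (fun x => V (φ x))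
      (ENNReal.ofReal b • (Measure.dirac q).restrict (stdSimplex ℝ Ω)) := fun b q =>
    (integrable_dirac enorm_lt_top).restrict.smul_measure ENNReal.ofReal_ne_top
  have hfin : ∀ (b : ℝ) (q : Ω → ℝ), ENNReal.ofReal b * Measure.dirac q (invest r) ≠ ⊤ :=
    fun b q => ENNReal.mul_ne_top ENNReal.ofReal_ne_top (measure_ne_top _ _)
  simp only [dppPayoff, twoPoint, Measure.add_apply, Measure.smul_apply, smul_eq_mul,
    Measure.restrict_add, Measure.restrict_smul, integral_add_measure (hint _ _) (hint _ _),
    integral_smul_measure, ENNReal.toReal_add (hfin _ _) (hfin _ _), ENNReal.toReal_mul,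
    ENNReal.toReal_ofReal ha₀, ENNReal.toReal_ofReal (sub_nonneg.2 ha₁)]
  ring

theorem dppPayoff_le_of_abs_le (r : Ω → ℝ) (δ : ℝ) {φ : (Ω → ℝ) → Ω → ℝ}
    (hφ : MapsTo φ (stdSimplex ℝ Ω) (stdSimplex ℝ Ω)) {V : (Ω → ℝ) → ℝ} {C : ℝ}
    (hC : ∀ p ∈ stdSimplex ℝ Ω, |V p| ≤ C) (μ : Measure (Ω → ℝ)) [IsProbabilityMeasure μ] :
    dppPayoff r δ φ V μ ≤ |1 - δ| + |δ| * |C| := by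
  have hI : (1 - δ) * (μ (invest r)).toReal ≤ |1 - δ| := by
    refine (le_abs_self _).trans ?_
    rw [abs_mul, ENNReal.abs_toReal]
    exact mul_le_of_le_one_right (abs_nonneg _) measureReal_le_one
  have hV : |∫ q in stdSimplex ℝ Ω, V (φ q) ∂μ| ≤ |C| := by
    have := norm_integral_le_of_norm_le_const (μ := μ.restrict (stdSimplex ℝ Ω))
      (f := fun q => V (φ q)) (C := |C|) (ae_restrict_of_forall_mem
        (isClosed_stdSimplex ℝ Ω).measurableSet fun q hq => (hC _ (hφ hq)).trans (le_abs_self C))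
    rw [Real.norm_eq_abs, measureReal_restrict_apply_univ] at this
    exact this.trans (mul_le_of_le_one_right (abs_nonneg C) measureReal_le_one)
  have hδV : δ * ∫ q in stdSimplex ℝ Ω, V (φ q) ∂μ ≤ |δ| * |C| :=
    calc δ * ∫ q in stdSimplex ℝ Ω, V (φ q) ∂μ
        ≤ |δ * ∫ q in stdSimplex ℝ Ω, V (φ q) ∂μ| := le_abs_self _
      _ = |δ| * |∫ q in stdSimplex ℝ Ω, V (φ q) ∂μ| := abs_mul _ _
      _ ≤ |δ| * |C| := by gcongr
  rw [dppPayoff]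
  linarith

theorem SatisfiesDPP.dppPayoff_le {r : Ω → ℝ} {δ : ℝ} {φ : (Ω → ℝ) → Ω → ℝ}
    {V : (Ω → ℝ) → ℝ} (hV : SatisfiesDPP r δ φ V)
    (hφ : MapsTo φ (stdSimplex ℝ Ω) (stdSimplex ℝ Ω)) {C : ℝ}
    (hC : ∀ p ∈ stdSimplex ℝ Ω, |V p| ≤ C) {p : Ω → ℝ} (hp : p ∈ stdSimplex ℝ Ω)
    {μ : Measure (Ω → ℝ)} (hμ : μ ∈ Splittings p) : dppPayoff r δ φ V μ ≤ V p := by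
  rw [hV p hp]
  refine le_csSup ⟨|1 - δ| + |δ| * |C|, ?_⟩ ⟨μ, hμ, rfl⟩
  rintro _ ⟨ν, ⟨hν, -⟩, rfl⟩
  exact dppPayoff_le_of_abs_le r δ hφ hC ν

end Splittings

theorem optimal_two_point_splitting_general [Fintype Ω]
    (r : Ω → ℝ) (δ : ℝ)
    (φ : (Ω → ℝ) → Ω → ℝ)
    (hφmaps : MapsTo φ (stdSimplex ℝ Ω) (stdSimplex ℝ Ω))
    (V : (Ω → ℝ) → ℝ)
    (hVb : ∃ C, ∀ p ∈ stdSimplex ℝ Ω, |V p| ≤ C)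
    (hVconc : ConcaveOn ℝ (stdSimplex ℝ Ω) V)
    (hV : SatisfiesDPP r δ φ V)
    (p : Ω → ℝ)
    (qi qj : Ω → ℝ) (hqi : qi ∈ stdSimplex ℝ Ω) (hqj : qj ∈ stdSimplex ℝ Ω)
    (ai aj : ℝ) (hai : 0 < ai) (haj : 0 < aj) (hsum : ai + aj = 1)
    (hdecomp : p = ai • qi + aj • qj)
    (hopt : dppPayoff r δ φ V (twoPoint ai qi qj) = V p) :
    (∀ t ∈ Icc (0 : ℝ) 1,
      V (t • qi + (1 - t) • qj) = t * V qi + (1 - t) * V qj) ∧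
    (∀ ai' aj' : ℝ, 0 ≤ ai' → 0 ≤ aj' → ai' + aj' = 1 →
      twoPoint ai' qi qj ∈ Splittings (ai' • qi + aj' • qj) ∧
      dppPayoff r δ φ V (twoPoint ai' qi qj) = V (ai' • qi + aj' • qj)) := by
  obtain ⟨C, hC⟩ := hVb
  obtain rfl : aj = 1 - ai := eq_sub_of_add_eq' hsum
  subst hdecomp
  set c : (Ω → ℝ) → ℝ := fun q => dppPayoff r δ φ V (Measure.dirac q)
  have hci : c qi ≤ V qi := hV.dppPayoff_le hφmaps hC hqi (dirac_mem_splittings hqi)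
  have hcj : c qj ≤ V qj := hV.dppPayoff_le hφmaps hC hqj (dirac_mem_splittings hqj)
  have hpay : V (ai • qi + (1 - ai) • qj) = ai * c qi + (1 - ai) * c qj := by
    rw [← hopt, dppPayoff_twoPoint r δ φ V hai.le (by linarith)]
  have hle_chord : V (ai • qi + (1 - ai) • qj) ≤ ai * V qi + (1 - ai) * V qj :=
    hpay.trans_le (by gcongr)
  have haff : ∀ t ∈ Icc (0 : ℝ) 1, V (t • qi + (1 - t) • qj) = t * V qi + (1 - t) * V qj :=
    fun t ht => hVconc.eq_chord_of_le_chord hqi hqj hai (by linarith) hle_chord ht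
  -- equality in `hle_chord` forces `V = c` at both endpoints
  have hchord : ai * V qi + (1 - ai) * V qj ≤ V (ai • qi + (1 - ai) • qj) :=
    hVconc.2 hqi hqj hai.le haj.le hsum
  have hVqi : V qi = c qi := by nlinarith
  have hVqj : V qj = c qj := by nlinarith
  refine ⟨haff, fun a' b' ha' hb' hab' => ?_⟩
  obtain rfl : b' = 1 - a' := eq_sub_of_add_eq' hab'
  have ha'1 : a' ≤ 1 := by linarith
  refine ⟨twoPoint_mem_splittings ha' ha'1 hqi hqj, ?_⟩
  rw [dppPayoff_twoPoint r δ φ V ha' ha'1, haff a' ⟨ha', ha'1⟩, hVqi, hVqj]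

/-- if an optimal splitting at `p ∈ J` is a two-point splitting between `q_I`
and `q_J` with positive weights, then (1) `V` is affine on the segment `[q_I, q_J]`, and
(2) at every point `p′` of this segment, the corresponding two-point splitting between
`q_I` and `q_J` attains the supremum in the dynamic programming equation. -/
theorem optimal_two_point_splitting [Fintype Ω] [Nonempty Ω]
    (r : Ω → ℝ) (δ : ℝ) (hδ : δ ∈ Ico (0 : ℝ) 1)
    (φ : (Ω → ℝ) → Ω → ℝ)
    (hφmaps : MapsTo φ (stdSimplex ℝ Ω) (stdSimplex ℝ Ω))
    (hφcont : ContinuousOn φ (stdSimplex ℝ Ω))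
    (hφaff : ∀ x ∈ stdSimplex ℝ Ω, ∀ y ∈ stdSimplex ℝ Ω, ∀ t ∈ Icc (0 : ℝ) 1,
      φ (t • x + (1 - t) • y) = t • φ x + (1 - t) • φ y)
    (V : (Ω → ℝ) → ℝ)
    (hVb : ∃ C, ∀ p ∈ stdSimplex ℝ Ω, |V p| ≤ C)
    (hVcont : ContinuousOn V (stdSimplex ℝ Ω))
    (hVconc : ConcaveOn ℝ (stdSimplex ℝ Ω) V)
    (hV : SatisfiesDPP r δ φ V)
    (p : Ω → ℝ) (hp : p ∈ stdSimplex ℝ Ω) (hpJ : p ∉ invest r)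
    (qi qj : Ω → ℝ) (hqi : qi ∈ stdSimplex ℝ Ω) (hqj : qj ∈ stdSimplex ℝ Ω)
    (ai aj : ℝ) (hai : 0 < ai) (haj : 0 < aj) (hsum : ai + aj = 1)
    (hdecomp : p = ai • qi + aj • qj)
    (hmem : twoPoint ai qi qj ∈ Splittings p)
    (hopt : dppPayoff r δ φ V (twoPoint ai qi qj) = V p) :
    (∀ t ∈ Icc (0 : ℝ) 1,
      V (t • qi + (1 - t) • qj) = t * V qi + (1 - t) * V qj) ∧
    (∀ ai' aj' : ℝ, 0 ≤ ai' → 0 ≤ aj' → ai' + aj' = 1 →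
      twoPoint ai' qi qj ∈ Splittings (ai' • qi + aj' • qj) ∧
      dppPayoff r δ φ V (twoPoint ai' qi qj) = V (ai' • qi + aj' • qj)) :=
  optimal_two_point_splitting_general r δ φ hφmaps V hVb hVconc hV p qi qj hqi hqj ai aj hai haj
    hsum hdecomp hopt

end
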